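/- Modulo 7, the formal power series f_1^3 = Π_{i≥1}(1-q^i)^3 has zero coefficients on q^m for all m ≡ 2, 4, 5, or 6 (mod 7); that is, f_1^3 ≡ J_0(q^7) + q·J_1(q^7) + q^3·J_3(q^7) (mod 7) for some integer power series J_0, J_1, J_3. -/

import Mathlib

open Polynomial Finset

noncomputable def gb : ℕ → ℕ → Polynomial ℤ
  | 0 => fun k => if k = 0 then 1 else 0
  | N + 1 => fun k =>
      match k with
      | 0 => 1
      | k + 1 => gb N (k + 1) + X ^ (N - k) * gb N k

lemma gb_succ (N k : ℕ) : gb (N + 1) (k + 1) = gb N (k + 1) + X ^ (N - k) * gb N k := rfl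

@[simp] lemma gb_zero (N : ℕ) : gb N 0 = 1 := by cases N <;> rfl

lemma gb_eq_zero {N k : ℕ} (h : N < k) : gb N k = 0 := by
  induction N generalizing k with
  | zero => match k, h with | k+1, _ => simp [gb]
  | succ N ih =>
    match k, h with
    | k+1, h => rw [gb_succ, ih (by omega), ih (by omega), mul_zero, add_zero]

@[simp] lemma gb_diag (N : ℕ) : gb N N = 1 := by
  induction N with
  | zero => rfl
  | succ N ih => rw [gb_succ, ih, gb_eq_zero (by omega), Nat.sub_self, pow_zero, zero_add, one_mul]

lemma gb_prod {N k : ℕ} (h : k ≤ N) :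
    (∏ i ∈ range k, (1 - X ^ (i + 1))) * gb N k
      = ∏ i ∈ range k, (1 - (X : Polynomial ℤ) ^ (N - k + i + 1)) := by
  induction N generalizing k with
  | zero =>
    interval_cases k
    simp
  | succ N ih =>
    match k with
    | 0 => simp
    | k + 1 =>
      rcases Nat.lt_or_ge k N with hk | hk
      · have A := ih (show k + 1 ≤ N by omega)
        have B := ih (show k ≤ N by omega)
        have hQ' : (∏ i ∈ range (k+1), (1 - (X : Polynomial ℤ) ^ (N - (k+1) + i + 1)))
            = (∏ i ∈ range k, (1 - (X : Polynomial ℤ) ^ (N - k + i + 1))) * (1 - X ^ (N - k)) := by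
          rw [prod_range_succ']
          refine congrArg₂ _ (prod_congr rfl fun i _ => ?_) ?_
          · congr 2; omega
          · congr 2; omega
        have hx : (X : Polynomial ℤ) ^ (N - k) * X ^ (k + 1) = X ^ (N + 1) := by
          rw [← pow_add]; congr 1; omega
        have he : N + 1 - (k + 1) = N - k := by omega
        rw [he, gb_succ, prod_range_succ _ k, prod_range_succ (fun i => 1 - (X : Polynomial ℤ) ^ (N - k + i + 1)) k]
        have hx2 : (X : Polynomial ℤ) ^ (N - k + k + 1) = X ^ (N + 1) := by congr 1; omega
        rw [hQ'] at A
        have hP := prod_range_succ (fun i => 1 - (X : Polynomial ℤ) ^ (i + 1)) k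
        linear_combination A - gb N (k+1) * hP
          + X ^ (N - k) * (1 - X ^ (k + 1)) * B
          + (∏ i ∈ range k, (1 - (X : Polynomial ℤ) ^ (N - k + i + 1))) * (hx2 - hx)
      · have hkN : k = N := by omega
        subst hkN
        rw [gb_diag, mul_one]
        exact prod_congr rfl fun i _ => by congr 2; omega

/-- partial Euler products as polynomials -/
noncomputable def Phi (t : ℕ) : Polynomial ℤ := ∏ i ∈ range t, (1 - X ^ (i + 1))

lemma Phi_ne_zero (t : ℕ) : Phi t ≠ 0 := by
  intro h
  have : Polynomial.eval 0 (Phi t) = 1 := by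
    simp [Phi, eval_prod, zero_pow]
  rw [h] at this
  simp at this

lemma Phi_add (a b : ℕ) : Phi (a + b) = Phi a * ∏ i ∈ range b, (1 - X ^ (a + i + 1)) := by
  rw [Phi, Phi, prod_range_add]

lemma gb_prod' {N k : ℕ} (h : k ≤ N) : Phi (N - k) * (Phi k * gb N k) = Phi N := by
  simp only [Phi]
  rw [gb_prod h, ← prod_range_add, Nat.sub_add_cancel h]

lemma gb_symm {N k : ℕ} (h : k ≤ N) : gb N (N - k) = gb N k := by
  have h1 := gb_prod' h
  have h2 := gb_prod' (show N - k ≤ N by omega)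
  rw [show N - (N - k) = k by omega] at h2
  have hne : Phi (N - k) * Phi k ≠ 0 := mul_ne_zero (Phi_ne_zero _) (Phi_ne_zero _)
  have : Phi (N - k) * Phi k * gb N (N - k) = Phi (N - k) * Phi k * gb N k := by
    rw [mul_assoc, mul_assoc]
    rw [← h2] at h1
    linear_combination -h1
  exact mul_left_cancel₀ hne this

/-- triangular numbers -/
def tri : ℕ → ℕ
  | 0 => 0
  | k + 1 => tri k + (k + 1)

lemma tri_pred (k : ℕ) : tri (k - 1) + k = tri k := by
  cases k with
  | zero => rfl
  | succ k => rfl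

lemma two_tri (k : ℕ) : 2 * tri k = k * (k + 1) := by
  induction k with
  | zero => rfl
  | succ k ih =>
    have : 2 * tri (k+1) = 2 * tri k + 2 * (k+1) := by rw [tri]; ring
    rw [this, ih]; ring

/-- coefficients in the finite q-binomial theorem -/
noncomputable def qc (a N k : ℕ) : Polynomial ℤ :=
  (-1) ^ k * X ^ (tri (k - 1) + a * (N - k)) * gb N k

lemma qc_step {a N k : ℕ} (hk : k ≤ N) :
    qc a (N + 1) (k + 1) = X ^ a * qc a N (k + 1) - X ^ N * qc a N k := by
  rcases Nat.lt_or_ge k N with h | h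
  · rw [qc, qc, qc, gb_succ]
    simp only [Nat.succ_sub_succ, Nat.add_sub_cancel, Nat.sub_zero]
    have h1 : (X : Polynomial ℤ) ^ (tri k + a * (N - k))
        = X ^ a * X ^ (tri k + a * (N - (k + 1))) := by
      rw [← pow_add]; congr 1
      have hnk : N - k = (N - (k+1)) + 1 := by omega
      rw [hnk, Nat.mul_succ]; omega
    have h2 : (X : Polynomial ℤ) ^ (tri k + a * (N - k)) * X ^ (N - k)
        = X ^ N * X ^ (tri (k - 1) + a * (N - k)) := by
      rw [← pow_add, ← pow_add]; congr 1
      have := tri_pred k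
      omega
    linear_combination ((-1 : Polynomial ℤ)) ^ (k+1) * gb N (k+1) * h1
      + ((-1 : Polynomial ℤ)) ^ (k+1) * gb N k * h2
  · have hkN : k = N := by omega
    subst hkN
    rw [qc, qc, qc, gb_succ, gb_eq_zero (show k < k + 1 by omega)]
    simp only [Nat.succ_sub_succ, Nat.sub_self, Nat.add_sub_cancel, Nat.mul_zero, Nat.add_zero,
      pow_zero, one_mul, zero_add, mul_zero, gb_diag, mul_one, Nat.sub_zero]
    have h3 : (X : Polynomial ℤ) ^ (tri k) = X ^ k * X ^ (tri (k-1)) := by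
      rw [← pow_add]; congr 1
      have := tri_pred k
      omega
    rw [h3]
    ring

lemma qc_top (a N : ℕ) : qc a N (N + 1) = 0 := by
  rw [qc, gb_eq_zero (by omega), mul_zero]

lemma qc_zero (a N : ℕ) : qc a N 0 = X ^ (a * N) := by
  rw [qc]
  show (-1) ^ 0 * X ^ (tri 0 + a * N) * gb N 0 = X ^ (a * N)
  rw [gb_zero]
  show (-1) ^ 0 * X ^ (0 + a * N) * 1 = X ^ (a * N)
  simp

lemma qbinom (a N : ℕ) :
    ∏ j ∈ range N, (C ((X : Polynomial ℤ) ^ a) - X * C ((X : Polynomial ℤ) ^ j))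
      = ∑ k ∈ range (N + 1), C (qc a N k) * X ^ k := by
  induction N with
  | zero => simp [qc_zero]
  | succ N ih =>
    rw [prod_range_succ, ih]
    have z2 : ∑ k ∈ range (N + 2), C (qc a N k) * X ^ k
        = (∑ k ∈ range (N + 1), C (qc a N (k + 1)) * X ^ (k + 1)) + C (qc a N 0) := by
      rw [sum_range_succ']; simp
    have z1 : ∑ k ∈ range (N + 2), C (qc a N k) * X ^ k
        = ∑ k ∈ range (N + 1), C (qc a N k) * X ^ k := by
      rw [sum_range_succ, qc_top]; simp
    have key : ∑ k ∈ range (N + 1), C (qc a N (k + 1)) * X ^ (k + 1)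
        = (∑ k ∈ range (N + 1), C (qc a N k) * X ^ k) - C (qc a N 0) := by
      rw [eq_sub_iff_add_eq, ← z2, z1]
    have rhs : ∑ k ∈ range (N + 2), C (qc a (N + 1) k) * X ^ k
        = (∑ k ∈ range (N + 1), C (qc a (N + 1) (k + 1)) * X ^ (k + 1)) + C (qc a (N + 1) 0) := by
      rw [sum_range_succ']; simp
    rw [rhs]
    have step : ∑ k ∈ range (N + 1), C (qc a (N + 1) (k + 1)) * X ^ (k + 1)
        = ∑ k ∈ range (N + 1),
            (C ((X : Polynomial ℤ) ^ a * qc a N (k + 1)) - C ((X : Polynomial ℤ) ^ N * qc a N k)) * X ^ (k + 1) := by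
      refine sum_congr rfl fun k hk => ?_
      have hk' : k ≤ N := by have := mem_range.mp hk; omega
      rw [qc_step hk', map_sub]
    rw [step]
    have expand : ∑ k ∈ range (N + 1),
          (C ((X : Polynomial ℤ) ^ a * qc a N (k + 1)) - C ((X : Polynomial ℤ) ^ N * qc a N k)) * X ^ (k + 1)
        = C ((X : Polynomial ℤ) ^ a) * (∑ k ∈ range (N + 1), C (qc a N (k + 1)) * X ^ (k + 1))
          - C ((X : Polynomial ℤ) ^ N) * X * (∑ k ∈ range (N + 1), C (qc a N k) * X ^ k) := by
      rw [mul_sum, mul_sum, ← sum_sub_distrib]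
      refine sum_congr rfl fun k hk => ?_
      rw [map_mul, map_mul, pow_succ]
      ring
    rw [expand, key, qc_zero, qc_zero]
    have hxa : (X : Polynomial ℤ) ^ (a * (N + 1)) = X ^ (a * N) * X ^ a := by
      rw [← pow_add, Nat.mul_succ]
    rw [hxa, map_mul]
    ring

lemma sum_range_id_tri (n : ℕ) : ∑ i ∈ range n, i = tri (n - 1) := by
  induction n with
  | zero => rfl
  | succ n ih =>
    rw [sum_range_succ, ih, Nat.succ_sub_one]
    exact tri_pred n

lemma prod_left (n : ℕ) :
    ∏ a ∈ range n, ((X : Polynomial ℤ) ^ n - X ^ a)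
      = (-1) ^ n * X ^ (tri (n - 1)) * Phi n := by
  have h1 : ∏ a ∈ range n, ((X : Polynomial ℤ) ^ n - X ^ a)
      = ∏ a ∈ range n, (X ^ a * (X ^ (n - a) - 1)) := by
    refine prod_congr rfl fun a ha => ?_
    have : a + (n - a) = n := by have := mem_range.mp ha; omega
    rw [mul_sub, mul_one, ← pow_add, this]
  rw [h1, prod_mul_distrib, prod_pow_eq_pow_sum, sum_range_id_tri]
  have h2 : ∏ a ∈ range n, ((X : Polynomial ℤ) ^ (n - a) - 1)
      = ∏ i ∈ range n, ((X : Polynomial ℤ) ^ (i + 1) - 1) := by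
    rw [← prod_range_reflect (fun i => (X : Polynomial ℤ) ^ (i + 1) - 1) n]
    refine prod_congr rfl fun a ha => ?_
    congr 2
    have := mem_range.mp ha; omega
  have h3 : ∏ i ∈ range n, ((X : Polynomial ℤ) ^ (i + 1) - 1)
      = (-1) ^ n * Phi n := by
    have h4 : ∏ i ∈ range n, ((X : Polynomial ℤ) ^ (i + 1) - 1)
        = ∏ i ∈ range n, ((-1) * (1 - (X : Polynomial ℤ) ^ (i + 1))) :=
      prod_congr rfl fun i _ => by ring
    rw [h4, prod_mul_distrib, prod_const, card_range, Phi]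
  rw [h2, h3]
  ring

lemma prod_right (n : ℕ) :
    ∏ a ∈ Ico (n + 1) (2 * n + 1), ((X : Polynomial ℤ) ^ n - X ^ a)
      = X ^ (n * n) * Phi n := by
  rw [prod_Ico_eq_prod_range]
  have h1 : ∀ i, (X : Polynomial ℤ) ^ n - X ^ (n + 1 + i) = X ^ n * (1 - X ^ (i + 1)) := by
    intro i
    rw [mul_sub, mul_one, ← pow_add]
    congr 2
    omega
  have h2 : 2 * n + 1 - (n + 1) = n := by omega
  rw [h2]
  rw [prod_congr rfl fun i _ => h1 i, prod_mul_distrib, prod_const, card_range, ← pow_mul, Phi]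

lemma prod_erase_eval (n : ℕ) :
    ∏ a ∈ (range (2 * n + 1)).erase n, ((X : Polynomial ℤ) ^ n - X ^ a)
      = (-1) ^ n * X ^ (tri (n - 1) + n * n) * (Phi n) ^ 2 := by
  have hsplit : (range (2 * n + 1)).erase n = range n ∪ Ico (n + 1) (2 * n + 1) := by
    ext a
    simp only [mem_erase, mem_range, mem_union, mem_Ico]
    omega
  have hdisj : Disjoint (range n) (Ico (n + 1) (2 * n + 1)) := by
    rw [Finset.disjoint_left]
    intro a ha hb
    have := mem_range.mp ha
    have := (mem_Ico.mp hb).1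
    omega
  rw [hsplit, prod_union hdisj, prod_left, prod_right, pow_add]
  ring

lemma derivative_finset_prod {ι : Type*} [DecidableEq ι] (s : Finset ι) (f : ι → Polynomial (Polynomial ℤ)) :
    Polynomial.derivative (∏ i ∈ s, f i)
      = ∑ i ∈ s, (∏ j ∈ s.erase i, f j) * Polynomial.derivative (f i) := by
  induction s using Finset.induction_on with
  | empty => simp
  | insert a s ha ih =>
    rw [prod_insert ha, derivative_mul, ih, sum_insert ha, erase_insert ha, mul_sum]
    rw [mul_comm (derivative (f a)) (∏ i ∈ s, f i)]
    rw [add_right_inj]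
    refine sum_congr rfl fun i hi => ?_
    rw [Finset.erase_insert_of_ne (by rintro rfl; exact ha hi), prod_insert (fun h => ha (Finset.mem_of_mem_erase h))]
    ring

lemma jacobi_deriv (n : ℕ) :
    ∑ k ∈ range (2 * n + 2), qc n (2 * n + 1) k * (k : Polynomial ℤ)
      = (-1) ^ (n + 1) * X ^ (tri n + n * n) * (Phi n) ^ 2 := by
  have H := congrArg (fun p => Polynomial.eval (1 : Polynomial ℤ) (Polynomial.derivative p))
    (qbinom n (2 * n + 1))
  simp only [derivative_finset_prod, Polynomial.derivative_sum, derivative_mul,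
    derivative_sub, derivative_C, derivative_X, derivative_X_pow, eval_finset_sum, eval_mul,
    eval_prod, eval_sub, eval_C, eval_X, eval_pow, eval_add, eval_neg, eval_one, eval_natCast,
    one_pow, zero_sub, mul_one, one_mul, zero_mul, mul_zero, zero_add, add_zero] at H
  rw [show 2 * n + 2 = 2 * n + 1 + 1 from rfl, ← H]
  rw [Finset.sum_eq_single n]
  · rw [prod_erase_eval]
    have hx : (X : Polynomial ℤ) ^ (tri (n-1) + n * n) * X ^ n = X ^ (tri n + n * n) := by
      rw [← pow_add]; congr 1
      have := tri_pred n
      omega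
    linear_combination -((-1 : Polynomial ℤ)) ^ n * (Phi n) ^ 2 * hx
  · intro b hb hbn
    apply mul_eq_zero_of_left
    refine prod_eq_zero (i := n) ?_ (sub_self _)
    exact mem_erase.mpr ⟨Ne.symm hbn, mem_range.mpr (by omega)⟩
  · intro h
    exact absurd (mem_range.mpr (by omega)) h

lemma expo1 (j d : ℕ) :
    tri (d - 1) + (j + d) * (2 * (j + d) + 1 - d)
      = tri (j + d) + (j + d) * (j + d) + tri j := by
  have hs : 2 * (j + d) + 1 - d = j + d + 1 + j := by omega
  rw [hs]
  refine Nat.eq_of_mul_eq_mul_left (show 0 < 2 by omega) ?_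
  have h2 := two_tri (j + d)
  have h3 := two_tri j
  rcases d with _ | d
  · have h1 : tri (0 - 1) = 0 := rfl
    rw [h1]
    nlinarith [h2, h3]
  · have h1 := two_tri d
    have hd : d + 1 - 1 = d := rfl
    rw [hd]
    nlinarith [h1, h2, h3]

lemma expo2 (j d : ℕ) :
    tri ((j + d) + j) + (j + d) * (2 * (j + d) + 1 - ((j + d) + 1 + j))
      = tri (j + d) + (j + d) * (j + d) + tri j := by
  have hs : 2 * (j + d) + 1 - ((j + d) + 1 + j) = d := by omega
  rw [hs]
  refine Nat.eq_of_mul_eq_mul_left (show 0 < 2 by omega) ?_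
  have h1 := two_tri ((j + d) + j)
  have h2 := two_tri (j + d)
  have h3 := two_tri j
  nlinarith [h1, h2, h3]

lemma pair_term {n j : ℕ} (h : j ≤ n) :
    qc n (2*n+1) (n - j) * ((n - j : ℕ) : Polynomial ℤ)
      + qc n (2*n+1) (n + 1 + j) * ((n + 1 + j : ℕ) : Polynomial ℤ)
    = (-1)^(n+1) * X^(tri n + n*n)
        * ((-1)^j * (2*(j : Polynomial ℤ)+1) * X^(tri j) * gb (2*n+1) (n - j)) := by
  obtain ⟨d, rfl⟩ : ∃ d, n = j + d := ⟨n - j, by omega⟩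
  rw [show j + d - j = d from by omega]
  have hsym : gb (2*(j+d)+1) ((j+d) + 1 + j) = gb (2*(j+d)+1) d := by
    have h2 := gb_symm (N := 2*(j+d)+1) (k := (j+d)+1+j) (by omega)
    rw [show 2*(j+d)+1 - ((j+d)+1+j) = d from by omega] at h2
    exact h2.symm
  rw [qc, qc, hsym]
  rw [show (j+d) + 1 + j - 1 = (j+d) + j from by omega]
  rw [expo1 j d, expo2 j d]
  have hx : (X : Polynomial ℤ)^(tri (j+d) + (j+d)*(j+d) + tri j)
      = X^(tri (j+d) + (j+d)*(j+d)) * X^(tri j) := by rw [← pow_add]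
  rw [hx]
  push_cast
  have e1 : (-1 : Polynomial ℤ)^((j+d)+1+j) = (-1)^(d+1) := by
    rw [show (j+d)+1+j = 2*j + (d+1) from by omega, pow_add,
      Even.neg_one_pow (even_two_mul j), one_mul]
  have e2 : (-1 : Polynomial ℤ)^((j+d)+1) = (-1)^j * (-1)^(d+1) := by
    rw [show (j+d)+1 = j + (d+1) from by omega, pow_add]
  have hs2 : ((-1 : Polynomial ℤ)^j) * ((-1)^j) = 1 := by
    rw [← pow_add]
    exact Even.neg_one_pow (by exact Even.add_self j)
  rw [e1, e2]
  linear_combination (-(1:Polynomial ℤ))^d * X^(tri (j+d) + (j+d)*(j+d)) * X^(tri j)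
    * gb (2*(j+d)+1) d * (2*(j : Polynomial ℤ)+1) * hs2

lemma jacobi_sq (n : ℕ) :
    (Phi n) ^ 2
      = ∑ j ∈ range (n+1), (-1)^j * (2*(j : Polynomial ℤ)+1) * X^(tri j) * gb (2*n+1) (n-j) := by
  have H := jacobi_deriv n
  have split : ∑ k ∈ range (2*n+2), qc n (2*n+1) k * (k : Polynomial ℤ)
      = (∑ k ∈ range (n+1), qc n (2*n+1) k * (k : Polynomial ℤ))
        + ∑ k ∈ Ico (n+1) (2*n+2), qc n (2*n+1) k * (k : Polynomial ℤ) := by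
    rw [range_eq_Ico, ← Finset.sum_Ico_consecutive _ (by omega : 0 ≤ n+1) (by omega : n+1 ≤ 2*n+2),
      ← range_eq_Ico]
  have refl1 : ∑ k ∈ range (n+1), qc n (2*n+1) k * (k : Polynomial ℤ)
      = ∑ j ∈ range (n+1), qc n (2*n+1) (n - j) * ((n - j : ℕ) : Polynomial ℤ) := by
    rw [← Finset.sum_range_reflect]
    refine sum_congr rfl fun j hj => ?_
    congr 2 <;> try omega
  have ico1 : ∑ k ∈ Ico (n+1) (2*n+2), qc n (2*n+1) k * (k : Polynomial ℤ)
      = ∑ j ∈ range (n+1), qc n (2*n+1) (n+1+j) * ((n+1+j : ℕ) : Polynomial ℤ) := by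
    rw [Finset.sum_Ico_eq_sum_range]
    refine sum_congr (by congr 1; omega) fun j hj => ?_
    congr 2 <;> try omega
  rw [split, refl1, ico1, ← sum_add_distrib] at H
  have H2 : ∑ j ∈ range (n+1),
        (qc n (2*n+1) (n - j) * ((n - j : ℕ) : Polynomial ℤ)
          + qc n (2*n+1) (n+1+j) * ((n+1+j : ℕ) : Polynomial ℤ))
      = (-1)^(n+1) * X^(tri n + n*n)
          * ∑ j ∈ range (n+1), (-1)^j * (2*(j : Polynomial ℤ)+1) * X^(tri j) * gb (2*n+1) (n-j) := by
    rw [mul_sum]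
    refine sum_congr rfl fun j hj => ?_
    exact pair_term (by have := mem_range.mp hj; omega)
  rw [H2] at H
  have hne : ((-1 : Polynomial ℤ))^(n+1) * X^(tri n + n*n) ≠ 0 :=
    mul_ne_zero (pow_ne_zero _ (neg_ne_zero.mpr one_ne_zero)) (pow_ne_zero _ X_ne_zero)
  exact (mul_left_cancel₀ hne H).symm

noncomputable def PhiP (t : ℕ) : PowerSeries ℤ := ∏ i ∈ range t, (1 - PowerSeries.X ^ (i + 1))

lemma tri_ge (j : ℕ) : j ≤ tri j := by
  induction j with
  | zero => simp
  | succ j ih => rw [tri]; omega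

lemma jacobi_sq_P (n : ℕ) :
    (PhiP n) ^ 2 = ∑ j ∈ range (n + 1),
      (-1 : PowerSeries ℤ) ^ j * (2 * (j : PowerSeries ℤ) + 1) * PowerSeries.X ^ (tri j)
        * ((gb (2 * n + 1) (n - j) : Polynomial ℤ) : PowerSeries ℤ) := by
  have H := congrArg (Polynomial.coeToPowerSeries.ringHom (R := ℤ)) (jacobi_sq n)
  rw [map_pow, map_sum] at H
  have hPhi : Polynomial.coeToPowerSeries.ringHom (R := ℤ) (Phi n) = PhiP n := by
    rw [Phi, PhiP, map_prod]
    refine prod_congr rfl fun i _ => ?_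
    rw [map_sub, map_one, map_pow, Polynomial.coeToPowerSeries.ringHom_apply, Polynomial.coe_X]
  rw [hPhi] at H
  rw [H]
  refine sum_congr rfl fun j hj => ?_
  simp only [map_mul, map_pow, map_neg, map_one, map_add, map_natCast, map_ofNat,
    Polynomial.coeToPowerSeries.ringHom_apply, Polynomial.coe_X]

lemma dvd_mul_one_sub {t : ℕ} {A B : PowerSeries ℤ}
    (hA : (PowerSeries.X : PowerSeries ℤ) ^ t ∣ (A - 1))
    (hB : (PowerSeries.X : PowerSeries ℤ) ^ t ∣ (B - 1)) :
    (PowerSeries.X : PowerSeries ℤ) ^ t ∣ (A * B - 1) := by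
  have h : A * B - 1 = A * (B - 1) + (A - 1) := by ring
  rw [h]
  exact dvd_add (Dvd.dvd.mul_left hB A) hA

lemma one_sub_prod_dvd (t : ℕ) (s : Finset ℕ) (e : ℕ → ℕ) (he : ∀ i ∈ s, t ≤ e i) :
    (PowerSeries.X : PowerSeries ℤ) ^ t ∣ ((∏ i ∈ s, (1 - PowerSeries.X ^ (e i))) - 1) := by
  induction s using Finset.induction_on with
  | empty => simp
  | @insert a s' ha ih =>
    rw [prod_insert ha]
    refine dvd_mul_one_sub ?_ (ih fun i hi => he i (mem_insert_of_mem hi))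
    have h1 : (1 : PowerSeries ℤ) - PowerSeries.X ^ (e a) - 1 = -(PowerSeries.X ^ (e a)) := by ring
    rw [h1]
    exact (dvd_neg).mpr (pow_dvd_pow _ (he a (mem_insert_self a s')))

lemma unit_part {n j : ℕ} (h : j ≤ n) :
    (PowerSeries.X : PowerSeries ℤ) ^ (n - j + 1)
      ∣ (PhiP n * ((gb (2 * n + 1) (n - j) : Polynomial ℤ) : PowerSeries ℤ) - 1) := by
  have h1 : PhiP n = PhiP (n - j) * ∏ i ∈ range j, (1 - PowerSeries.X ^ ((n - j) + i + 1)) := by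
    have ha := prod_range_add (fun i => (1 : PowerSeries ℤ) - PowerSeries.X ^ (i + 1)) (n - j) j
    rw [show n - j + j = n from by omega] at ha
    rw [PhiP, PhiP, ha]
  have h2 : PhiP (n - j) * ((gb (2 * n + 1) (n - j) : Polynomial ℤ) : PowerSeries ℤ)
      = ∏ i ∈ range (n - j), (1 - PowerSeries.X ^ ((2 * n + 1) - (n - j) + i + 1)) := by
    have hp := congrArg (Polynomial.coeToPowerSeries.ringHom (R := ℤ))
      (gb_prod (N := 2 * n + 1) (k := n - j) (by omega))
    rw [map_mul, map_prod, map_prod] at hp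
    rw [PhiP, ← Polynomial.coeToPowerSeries.ringHom_apply]
    rw [show (∏ i ∈ range (n - j), ((1 : PowerSeries ℤ) - PowerSeries.X ^ (i + 1)))
        = ∏ i ∈ range (n - j), Polynomial.coeToPowerSeries.ringHom (R := ℤ) (1 - X ^ (i + 1)) from
      prod_congr rfl fun i _ => by
        rw [map_sub, map_one, map_pow, Polynomial.coeToPowerSeries.ringHom_apply, Polynomial.coe_X]]
    rw [hp]
    refine prod_congr rfl fun i _ => ?_
    rw [map_sub, map_one, map_pow, Polynomial.coeToPowerSeries.ringHom_apply, Polynomial.coe_X]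
  have h3 : PhiP n * ((gb (2 * n + 1) (n - j) : Polynomial ℤ) : PowerSeries ℤ)
      = (∏ i ∈ range (n - j), (1 - PowerSeries.X ^ ((2 * n + 1) - (n - j) + i + 1)))
        * ∏ i ∈ range j, (1 - PowerSeries.X ^ ((n - j) + i + 1)) := by
    rw [h1, ← h2]; ring
  rw [h3]
  refine dvd_mul_one_sub ?_ ?_
  · exact one_sub_prod_dvd _ _ _ fun i _ => by omega
  · exact one_sub_prod_dvd _ _ _ fun i _ => by omega

lemma seven_dvd {j m : ℕ} (hjm : tri j = m)
    (hm : m % 7 = 2 ∨ m % 7 = 4 ∨ m % 7 = 5 ∨ m % 7 = 6) :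
    (7 : ℤ) ∣ ((-1) ^ j * (2 * (j : ℤ) + 1)) := by
  have h2 : 2 * m = j * (j + 1) := by rw [← hjm, two_tri]
  obtain ⟨q, a, hja, ha⟩ : ∃ q a, j = 7 * q + a ∧ a < 7 := ⟨j / 7, j % 7, by omega, by omega⟩
  subst hja
  have key : 2 * m = 7 * (7 * q * q + 2 * q * a + q) + a * (a + 1) := by rw [h2]; ring
  have hd : (7 : ℕ) ∣ 2 * (7 * q + a) + 1 := by
    generalize hG : 7 * q * q + 2 * q * a + q = K at key
    rcases hm with h | h | h | h <;> interval_cases a <;> omega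
  have h7 : (7 : ℤ) ∣ (2 * ((7 * q + a : ℕ) : ℤ) + 1) := by
    have heq : (2 * ((7 * q + a : ℕ) : ℤ) + 1) = ((2 * (7 * q + a) + 1 : ℕ) : ℤ) := by push_cast; ring
    rw [heq]
    exact_mod_cast Int.natCast_dvd_natCast.mpr hd
  exact Dvd.dvd.mul_left h7 _


/-- The formal power series `f m = prod_{i >= 1} (1 - q^(m*i))` in `ZZ[[q]]`, defined
coefficient-wise via the stabilizing finite partial products. -/
noncomputable def f (m : Nat) : PowerSeries Int :=
  PowerSeries.mk fun n =>
    PowerSeries.coeff (R := Int) n (Finset.prod (Finset.range (n + 1)) fun i => (1 - PowerSeries.X ^ (m * (i + 1))))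

/-- Modulo 7, `f_1^3` has vanishing coefficients on `q^m` for `m = 2, 4, 5, 6 (mod 7)`. -/
theorem f1_cubed_coeff_mod7 (m : Nat)
    (hm : m % 7 = 2 \/ m % 7 = 4 \/ m % 7 = 5 \/ m % 7 = 6) :
    PowerSeries.coeff (R := Int) m ((f 1) ^ 3) % 7 = 0 := by
  classical
  have coeff_f1 : ∀ k : ℕ, PowerSeries.coeff (R := ℤ) k (f 1) = PowerSeries.coeff (R := ℤ) k (PhiP (k + 1)) := by
    intro k
    simp only [f, PowerSeries.coeff_mk, one_mul, PhiP]
  have stab : ∀ (s t k : ℕ), k < s → s ≤ t →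
      PowerSeries.coeff (R := ℤ) k (PhiP s) = PowerSeries.coeff (R := ℤ) k (PhiP t) := by
    intro s t k hk hst
    induction t, hst using Nat.le_induction with
    | base => rfl
    | succ t ht ih =>
      have hPt : PhiP (t + 1) = PhiP t * (1 - PowerSeries.X ^ (t + 1)) := by
        rw [PhiP, PhiP, prod_range_succ]
      rw [ih, hPt, mul_sub, mul_one, map_sub]
      have h0 : PowerSeries.coeff (R := ℤ) k (PhiP t * PowerSeries.X ^ (t + 1)) = 0 := by
        have hdvd : (PowerSeries.X : PowerSeries ℤ) ^ (t + 1) ∣ PhiP t * PowerSeries.X ^ (t + 1) :=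
          Dvd.intro_left _ rfl
        exact PowerSeries.X_pow_dvd_iff.mp hdvd k (by omega)
      rw [h0, sub_zero]
  have hdvd1 : (PowerSeries.X : PowerSeries ℤ) ^ (m + 1) ∣ (f 1 - PhiP (m + 1)) := by
    refine PowerSeries.X_pow_dvd_iff.mpr fun k hk => ?_
    rw [map_sub, coeff_f1 k, stab (k + 1) (m + 1) k (by omega) (by omega), sub_self]
  have hc3 : PowerSeries.coeff (R := ℤ) m ((f 1) ^ 3) = PowerSeries.coeff (R := ℤ) m ((PhiP (m + 1)) ^ 3) := by
    obtain ⟨c, hc⟩ := hdvd1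
    have hcube : (f 1) ^ 3 - (PhiP (m + 1)) ^ 3
        = PowerSeries.X ^ (m + 1) * (c * ((f 1) ^ 2 + f 1 * PhiP (m + 1) + (PhiP (m + 1)) ^ 2)) := by
      have hf : f 1 = PhiP (m + 1) + PowerSeries.X ^ (m + 1) * c := by linear_combination hc
      rw [hf]; ring
    have hdd : (PowerSeries.X : PowerSeries ℤ) ^ (m + 1) ∣ ((f 1) ^ 3 - (PhiP (m + 1)) ^ 3) :=
      ⟨_, hcube⟩
    have h0 := PowerSeries.X_pow_dvd_iff.mp hdd m (by omega)
    rw [map_sub] at h0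
    omega
  have hsplit : PhiP (m + 1) = PhiP m * (1 - PowerSeries.X ^ (m + 1)) := by
    rw [PhiP, PhiP, prod_range_succ]
  have hc4 : PowerSeries.coeff (R := ℤ) m ((PhiP (m + 1)) ^ 3) = PowerSeries.coeff (R := ℤ) m ((PhiP m) ^ 3) := by
    have hcube : (PhiP (m + 1)) ^ 3 - (PhiP m) ^ 3
        = PowerSeries.X ^ (m + 1) * ((PhiP m) ^ 3
            * (-3 + 3 * PowerSeries.X ^ (m + 1) - PowerSeries.X ^ (m + 1) * PowerSeries.X ^ (m + 1))) := by
      rw [hsplit]; ring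
    have hdd : (PowerSeries.X : PowerSeries ℤ) ^ (m + 1) ∣ ((PhiP (m + 1)) ^ 3 - (PhiP m) ^ 3) :=
      ⟨_, hcube⟩
    have h0 := PowerSeries.X_pow_dvd_iff.mp hdd m (by omega)
    rw [map_sub] at h0
    omega
  have hexp : (PhiP m) ^ 3 = PhiP m * (PhiP m) ^ 2 := by ring
  have hsum : PowerSeries.coeff (R := ℤ) m ((PhiP m) ^ 3)
      = ∑ j ∈ range (m + 1), ((-1 : ℤ) ^ j * (2 * (j : ℤ) + 1)) * (if m = tri j then 1 else 0) := by
    rw [hexp, jacobi_sq_P, mul_sum, map_sum]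
    refine sum_congr rfl fun j hj => ?_
    have hjm : j ≤ m := by have := mem_range.mp hj; omega
    obtain ⟨r, hr⟩ := unit_part (n := m) (j := j) hjm
    have hre : PhiP m * ((-1 : PowerSeries ℤ) ^ j * (2 * (j : PowerSeries ℤ) + 1)
          * PowerSeries.X ^ (tri j) * ((gb (2 * m + 1) (m - j) : Polynomial ℤ) : PowerSeries ℤ))
        = ((((-1) ^ j * (2 * (j : ℤ) + 1) : ℤ)) : PowerSeries ℤ)
            * (PowerSeries.X ^ (tri j)
              + PowerSeries.X ^ (tri j) * (PowerSeries.X ^ (m - j + 1) * r)) := by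
      have hz : ((((-1) ^ j * (2 * (j : ℤ) + 1) : ℤ)) : PowerSeries ℤ)
          = (-1 : PowerSeries ℤ) ^ j * (2 * (j : PowerSeries ℤ) + 1) := by push_cast; ring
      rw [hz]
      calc PhiP m * ((-1 : PowerSeries ℤ) ^ j * (2 * (j : PowerSeries ℤ) + 1)
              * PowerSeries.X ^ (tri j) * ((gb (2 * m + 1) (m - j) : Polynomial ℤ) : PowerSeries ℤ))
          = ((-1 : PowerSeries ℤ) ^ j * (2 * (j : PowerSeries ℤ) + 1)) * (PowerSeries.X ^ (tri j)
              * (PhiP m * ((gb (2 * m + 1) (m - j) : Polynomial ℤ) : PowerSeries ℤ))) := by ring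
        _ = _ := by
            rw [show PhiP m * ((gb (2 * m + 1) (m - j) : Polynomial ℤ) : PowerSeries ℤ)
                = 1 + PowerSeries.X ^ (m - j + 1) * r from by linear_combination hr]
            ring
    rw [hre, ← zsmul_eq_mul, map_zsmul, smul_eq_mul]
    congr 1
    rw [map_add, PowerSeries.coeff_X_pow]
    have h0 : PowerSeries.coeff (R := ℤ) m
        (PowerSeries.X ^ (tri j) * (PowerSeries.X ^ (m - j + 1) * r)) = 0 := by
      have hdd : (PowerSeries.X : PowerSeries ℤ) ^ (tri j + (m - j + 1))
          ∣ PowerSeries.X ^ (tri j) * (PowerSeries.X ^ (m - j + 1) * r) :=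
        ⟨r, by rw [pow_add]; ring⟩
      refine PowerSeries.X_pow_dvd_iff.mp hdd m ?_
      have := tri_ge j
      omega
    rw [h0, add_zero]
  rw [hc3, hc4, hsum]
  apply Int.emod_eq_zero_of_dvd
  refine dvd_sum fun j hj => ?_
  by_cases hj2 : m = tri j
  · rw [if_pos hj2, mul_one]
    exact seven_dvd hj2.symm hm
  · rw [if_neg hj2, mul_zero]
    exact dvd_zero 7
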